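/- Fix 1 < α < 2 and z ∈ ℝ^M, and suppose all coordinates of p* := α-Entmax(z) are strictly positive (i.e., κ = M). Let τ ∈ ℝ be the threshold satisfying p*_i = [(α−1) z_i − τ]^{1/(α−1)} for all i. Then τ/(α−1) ≥ (1/M) ∑_{i=1}^M z_i − M^{1−α}/(α−1) ≥ z_{(M)} − M^{1−α}/(α−1), where z_{(M)} = min_i z_i. Equivalently, Hölder’s inequality with exponents p = 1/(α−1) and q = 1/(2−α) yields M^{2−α} ≥ (α−1) ∑_{i=1}^M z_i − M τ. -/

import Mathlib

open scoped BigOperators Classical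

/-- Tsallis entropy `Ψ_α(p) = (1/(α(α−1))) ∑ᵢ (pᵢ − pᵢ^α)` (for `α > 1`). -/
noncomputable def tsallis (α : ℝ) {M : ℕ} (p : Fin M → ℝ) : ℝ :=
  (1 / (α * (α - 1))) * ∑ i, (p i - p i ^ α)

/-- The objective `p ↦ ⟨p, z⟩ − Ψ_α(p)` whose maximizer over the simplex is `α-Entmax(z)`. -/
noncomputable def entmaxObj (α : ℝ) {M : ℕ} (z p : Fin M → ℝ) : ℝ :=
  (∑ i, p i * z i) - tsallis α p

/-- The `k`-th largest coordinate (1-indexed) of `z ∈ ℝ^M`. -/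
noncomputable def kthLargest {M : ℕ} (z : Fin M → ℝ) (k : ℕ) : ℝ :=
  if h : M - k < M then z (Tuple.sort z ⟨M - k, h⟩) else 0

/-!
Each coordinate satisfies `(α - 1) zᵢ - τ ≤ pᵢ ^ (α - 1)`, with equality when the base is positive.
Summing, and bounding `∑ pᵢ ^ (α - 1) = ∑ pᵢ ^ (α - 1) · 1` by Hölder with exponents `1/(α-1)` and
`1/(2-α)`, gives `(α - 1) ∑ zᵢ - M τ ≤ (∑ pᵢ) ^ (α - 1) M ^ (2 - α) = M ^ (2 - α)`. The first
inequality is this one divided by `M (α - 1)`, the second is "mean ≥ minimum".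
-/

open Finset

namespace Real

theorem sum_rpow_le_card_rpow_mul_rpow_sum {ι : Type*} (s : Finset ι) {x : ι → ℝ}
    (hx : ∀ i ∈ s, 0 ≤ x i) {r : ℝ} (hr₀ : 0 < r) (hr₁ : r < 1) :
    ∑ i ∈ s, x i ^ r ≤ (#s : ℝ) ^ (1 - r) * (∑ i ∈ s, x i) ^ r := by
  have holder := inner_le_Lp_mul_Lq_of_nonneg s (f := fun i ↦ x i ^ r) (g := fun _ ↦ 1)
    (holderConjugate_one_div hr₀ (sub_pos.2 hr₁) (add_sub_cancel r 1))
    (fun i hi ↦ rpow_nonneg (hx i hi) r) (fun _ _ ↦ zero_le_one)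
  have hcancel : ∀ i ∈ s, (x i ^ r) ^ (1 / r) = x i := fun i hi ↦ by
    rw [← rpow_mul (hx i hi), mul_one_div_cancel hr₀.ne', rpow_one]
  simp only [mul_one, one_rpow, sum_const, nsmul_eq_mul, one_div_one_div] at holder
  rw [sum_congr rfl hcancel] at holder
  linarith

theorem le_rpow_of_eq_rpow_one_div {x y r : ℝ} (hy : 0 ≤ y) (hr : 0 < r)
    (h : y = x ^ (1 / r)) : x ≤ y ^ r := by
  rcases le_or_gt x 0 with hx | hx
  · exact hx.trans (rpow_nonneg hy r)
  · rw [h, ← rpow_mul hx.le, one_div_mul_cancel hr.ne', rpow_one]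

end Real

theorem kthLargest_self_le {M : ℕ} (z : Fin M → ℝ) (i : Fin M) : kthLargest z M ≤ z i := by
  have hM : 0 < M := i.pos
  have h : kthLargest z M = z (Tuple.sort z ⟨0, hM⟩) := by
    simp [kthLargest, hM]
  simpa [h] using
    Tuple.monotone_sort z (Fin.mk_le_of_le_val (Nat.zero_le ((Tuple.sort z).symm i)))

theorem kthLargest_self_le_mean {M : ℕ} (hM : 0 < M) (z : Fin M → ℝ) :
    kthLargest z M ≤ (1 / (M : ℝ)) * ∑ i, z i := by
  rw [one_div_mul_eq_div, le_div_iff₀ (by exact_mod_cast hM), mul_comm]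
  simpa using card_nsmul_le_sum univ z (kthLargest z M) fun i _ ↦ kthLargest_self_le z i

theorem sum_sub_threshold_le {M : ℕ} {α : ℝ} (hα1 : 1 < α) (hα2 : α < 2) {z p : Fin M → ℝ}
    (hp : p ∈ stdSimplex ℝ (Fin M)) {τ : ℝ}
    (hτ : ∀ i, p i = ((α - 1) * z i - τ) ^ (1 / (α - 1))) :
    (α - 1) * ∑ i, z i - M * τ ≤ (M : ℝ) ^ (2 - α) :=
  calc (α - 1) * ∑ i, z i - M * τ = ∑ i, ((α - 1) * z i - τ) := by
        simp [sum_sub_distrib, mul_sum]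
    _ ≤ ∑ i, p i ^ (α - 1) :=
        sum_le_sum fun i _ ↦ Real.le_rpow_of_eq_rpow_one_div (hp.1 i) (by linarith) (hτ i)
    _ ≤ (M : ℝ) ^ (1 - (α - 1)) * (∑ i, p i) ^ (α - 1) := by
        simpa using Real.sum_rpow_le_card_rpow_mul_rpow_sum univ (fun i _ ↦ hp.1 i)
          (sub_pos.2 hα1) (by linarith)
    _ = (M : ℝ) ^ (2 - α) := by
        rw [hp.2, Real.one_rpow, mul_one]; ring_nf

theorem entmax_threshold_lower_bound_full_support_general
    {M : ℕ} (hM : 0 < M)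
    (α : ℝ) (hα1 : 1 < α) (hα2 : α < 2)
    (z : Fin M → ℝ)
    (p : Fin M → ℝ) (hp : p ∈ stdSimplex ℝ (Fin M))
    (τ : ℝ) (hτ : ∀ i, p i = ((α - 1) * z i - τ) ^ (1 / (α - 1))) :
    τ / (α - 1) ≥ (1 / (M : ℝ)) * (∑ i, z i) - (M : ℝ) ^ (1 - α) / (α - 1) ∧
    (1 / (M : ℝ)) * (∑ i, z i) - (M : ℝ) ^ (1 - α) / (α - 1) ≥
      kthLargest z M - (M : ℝ) ^ (1 - α) / (α - 1) ∧
    (M : ℝ) ^ (2 - α) ≥ (α - 1) * (∑ i, z i) - (M : ℝ) * τ := by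
  have hM' : (0 : ℝ) < M := by exact_mod_cast hM
  have hα : 0 < α - 1 := sub_pos.2 hα1
  have hsum := sum_sub_threshold_le hα1 hα2 hp hτ
  have hsplit : (M : ℝ) ^ (2 - α) = M * (M : ℝ) ^ (1 - α) := by
    rw [show 2 - α = 1 + (1 - α) by ring, Real.rpow_add hM', Real.rpow_one]
  refine ⟨?_, sub_le_sub_right (kthLargest_self_le_mean hM z) _, hsum⟩
  rw [ge_iff_le, ← sub_nonneg]
  have key : τ / (α - 1) - ((1 / (M : ℝ)) * ∑ i, z i - (M : ℝ) ^ (1 - α) / (α - 1)) =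
      ((M : ℝ) ^ (2 - α) - ((α - 1) * ∑ i, z i - M * τ)) / (M * (α - 1)) := by
    rw [hsplit]; field_simp; ring
  rw [key]
  exact div_nonneg (sub_nonneg.2 hsum) (by positivity)

/-- Threshold lower bound for fully supported `α-Entmax`, `1 < α < 2`: if all coordinates of
`p* = α-Entmax(z)` are strictly positive with threshold `τ` (so `p*ᵢ = ((α−1)zᵢ − τ)^{1/(α−1)}`),
then `τ/(α−1) ≥ (1/M)∑ᵢ zᵢ − M^{1−α}/(α−1) ≥ z_{(M)} − M^{1−α}/(α−1)`; equivalently (via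
Hölder's inequality) `M^{2−α} ≥ (α−1)∑ᵢ zᵢ − Mτ`. -/
theorem entmax_threshold_lower_bound_full_support
    {M : ℕ} (hM : 0 < M)
    (α : ℝ) (hα1 : 1 < α) (hα2 : α < 2)
    (z : Fin M → ℝ)
    (p : Fin M → ℝ) (hp : p ∈ stdSimplex ℝ (Fin M))
    (hpmax : IsMaxOn (entmaxObj α z) (stdSimplex ℝ (Fin M)) p)
    (hpos : ∀ i, 0 < p i)
    (τ : ℝ) (hτ : ∀ i, p i = ((α - 1) * z i - τ) ^ (1 / (α - 1))) :
    τ / (α - 1) ≥ (1 / (M : ℝ)) * (∑ i, z i) - (M : ℝ) ^ (1 - α) / (α - 1) ∧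
    (1 / (M : ℝ)) * (∑ i, z i) - (M : ℝ) ^ (1 - α) / (α - 1) ≥
      kthLargest z M - (M : ℝ) ^ (1 - α) / (α - 1) ∧
    (M : ℝ) ^ (2 - α) ≥ (α - 1) * (∑ i, z i) - (M : ℝ) * τ :=
  entmax_threshold_lower_bound_full_support_general hM α hα1 hα2 z p hp τ hτ
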